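/- arXiv:2307.00770 — 4 statements merged into one kernel-verified Lean document; each statement's English description precedes it below -/
import Mathlib

section
/- For every integer n ≥ 1, the number of decimal digits of v(n) is at most the number of decimal digits of n. -/
def L (n : ℕ) : ℕ := (Nat.digits 10 n).length

def v (n : ℕ) : ℤ :=
  ∑ p ∈ n.primeFactors,
    ((p : ℤ) + if 2 ≤ n.factorization p then (n.factorization p : ℤ) else 0)

/-!
Each prime-power contribution `p + α·[α > 1]` to `v n` is at most `p ^ α`, and a sum of numbers
that are all at least `2` is at most their product. Hence `v n ≤ ∑ p ^ α ≤ ∏ p ^ α = n`, and the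
number of digits is monotone.
-/

theorem Finset.sum_le_prod_of_two_le {ι : Type*} {s : Finset ι} {f : ι → ℕ}
    (h : ∀ i ∈ s, 2 ≤ f i) : ∑ i ∈ s, f i ≤ ∏ i ∈ s, f i := by
  classical
  induction s using Finset.induction_on with
  | empty => simp
  | @insert a s ha ih =>
    rw [Finset.sum_insert ha, Finset.prod_insert ha]
    have ha2 : 2 ≤ f a := h a (Finset.mem_insert_self a s)
    have hs := ih fun i hi ↦ h i (Finset.mem_insert_of_mem hi)
    rcases s.eq_empty_or_nonempty with rfl | ⟨b, hb⟩
    · simp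
    · have hprod : 2 ≤ ∏ i ∈ s, f i :=
        (h b (Finset.mem_insert_of_mem hb)).trans <| Finset.single_le_prod'
          (fun i hi ↦ one_le_two.trans (h i (Finset.mem_insert_of_mem hi))) hb
      calc f a + ∑ i ∈ s, f i ≤ f a + ∏ i ∈ s, f i := by gcongr
        _ ≤ f a * ∏ i ∈ s, f i := add_le_mul ha2 hprod

theorem Nat.add_le_pow {p k : ℕ} (hp : 2 ≤ p) (hk : 2 ≤ k) : p + k ≤ p ^ k := by
  obtain ⟨j, rfl⟩ : ∃ j, k = j + 1 := ⟨k - 1, by omega⟩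
  calc p + (j + 1) ≤ p * (j + 1) := add_le_mul hp hk
    _ ≤ p * p ^ j := by gcongr; exact Nat.lt_pow_self (by omega)
    _ = p ^ (j + 1) := by ring

theorem Nat.add_ite_le_pow {p k : ℕ} (hp : 2 ≤ p) (hk : 1 ≤ k) :
    p + (if 2 ≤ k then k else 0) ≤ p ^ k := by
  split_ifs with hk2
  · exact Nat.add_le_pow hp hk2
  · obtain rfl : k = 1 := by omega
    simp

theorem Nat.factorization_pos_of_mem_primeFactors {n p : ℕ} (hp : p ∈ n.primeFactors) :
    0 < n.factorization p := by
  rw [← Nat.support_factorization, Finsupp.mem_support_iff] at hp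
  exact Nat.pos_of_ne_zero hp

theorem v_le_self (n : ℕ) : v n ≤ n := by
  rcases Nat.eq_zero_or_pos n with rfl | hn
  · simp [v]
  calc v n ≤ ∑ p ∈ n.primeFactors, ((p ^ n.factorization p : ℕ) : ℤ) := by
        refine Finset.sum_le_sum fun p hp ↦ ?_
        exact_mod_cast Nat.add_ite_le_pow (Nat.prime_of_mem_primeFactors hp).two_le
          (Nat.factorization_pos_of_mem_primeFactors hp)
    _ ≤ ((∏ p ∈ n.primeFactors, p ^ n.factorization p : ℕ) : ℤ) := by
        rw [← Nat.cast_sum, Nat.cast_le]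
        refine Finset.sum_le_prod_of_two_le fun p hp ↦ ?_
        exact (Nat.prime_of_mem_primeFactors hp).two_le.trans
          (Nat.le_self_pow (Nat.factorization_pos_of_mem_primeFactors hp).ne' p)
    _ = n := by rw [← Nat.prod_primeFactors_pow_factorization hn.ne']

theorem stmt_6_general (n : ℕ) : L (v n).toNat ≤ L n :=
  Nat.le_length_digits_le 10 _ _ (Int.toNat_le.mpr (v_le_self n))

theorem stmt_6 (n : ℕ) (hn : 1 ≤ n) : L (v n).toNat ≤ L n :=
  stmt_6_general n
end

section
/- If m ≥ 1 is an integer such that both 5·10^m - 1 and 5·10^m - 3 are prime, then p = 5·10^m - 1 is a v-palindrome: 10 ∤ p, p ≠ r(p), and v(p) = v(r(p)). -/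
def r (n : ℕ) : ℕ := Nat.ofDigits 10 ((Nat.digits 10 n).reverse)

/-!
Write `x = 10 ^ m`. The decimal expansion of `p = 5x - 1` is `4` followed by `m` nines, so its
reversal is `10x - 6 = 2q` with `q = 5x - 3`. When `p` and `q` are both prime, the additivity of `v`
gives `v (r p) = v 2 + v q = 2 + q = p = v p`.
-/

theorem Nat.ofDigits_replicate_pred (b m : ℕ) :
    Nat.ofDigits b (List.replicate m (b - 1)) = b ^ m - 1 := by
  induction m with
  | zero => simp
  | succ n ih =>
    rw [List.replicate_succ, Nat.ofDigits_cons, ih]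
    rcases Nat.eq_zero_or_pos b with rfl | hb
    · simp
    · have hpow : 1 ≤ b ^ n := Nat.one_le_pow _ _ hb
      zify [hb, hpow, Nat.one_le_pow (n + 1) b hb]
      ring

theorem digits_five_mul_ten_pow_sub_one (m : ℕ) :
    Nat.digits 10 (5 * 10 ^ m - 1) = List.replicate m 9 ++ [4] := by
  induction m with
  | zero => simp
  | succ n ih =>
    have hpow : 1 ≤ 10 ^ n := Nat.one_le_pow _ _ (by norm_num)
    have hsplit : 5 * 10 ^ (n + 1) - 1 = 9 + 10 * (5 * 10 ^ n - 1) := by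
      rw [pow_succ]; omega
    rw [hsplit, Nat.digits_add 10 (by norm_num) 9 _ (by norm_num) (by norm_num), ih,
      List.replicate_succ, List.cons_append]

theorem r_five_mul_ten_pow_sub_one (m : ℕ) :
    r (5 * 10 ^ m - 1) = 2 * (5 * 10 ^ m - 3) := by
  have hpow : 1 ≤ 10 ^ m := Nat.one_le_pow _ _ (by norm_num)
  rw [r, digits_five_mul_ten_pow_sub_one, List.reverse_append, List.reverse_replicate,
    List.reverse_singleton, List.singleton_append, Nat.ofDigits_cons,
    Nat.ofDigits_replicate_pred 10 m]
  omega

theorem v_prime {p : ℕ} (hp : p.Prime) : v p = p := by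
  simp [v, hp.primeFactors, hp.factorization_self]

theorem Nat.Coprime.factorization_mul_apply_of_mem_primeFactors {a b p : ℕ} (hab : a.Coprime b)
    (hp : p ∈ a.primeFactors) : (a * b).factorization p = a.factorization p := by
  have hpb : p ∉ b.factorization.support := Finset.disjoint_left.mp hab.disjoint_primeFactors hp
  rw [Nat.factorization_mul_apply_of_coprime hab, Finsupp.notMem_support_iff.mp hpb, add_zero]

theorem v_mul_of_coprime {a b : ℕ} (hab : a.Coprime b) : v (a * b) = v a + v b := by
  rw [v, hab.primeFactors_mul, Finset.sum_union hab.disjoint_primeFactors, v, v]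
  congr 1 <;> refine Finset.sum_congr rfl fun p hp ↦ ?_
  · rw [hab.factorization_mul_apply_of_mem_primeFactors hp]
  · rw [mul_comm, hab.symm.factorization_mul_apply_of_mem_primeFactors hp]

theorem stmt_12 (m : ℕ) (hm : 1 ≤ m) (hp : (5 * 10 ^ m - 1).Prime)
    (hp2 : (5 * 10 ^ m - 3).Prime) :
    ¬ 10 ∣ (5 * 10 ^ m - 1) ∧ (5 * 10 ^ m - 1) ≠ r (5 * 10 ^ m - 1) ∧
      v (5 * 10 ^ m - 1) = v (r (5 * 10 ^ m - 1)) := by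
  have hpow : 10 ≤ 10 ^ m := Nat.le_self_pow (by omega) 10
  have hq_ne_two : 5 * 10 ^ m - 3 ≠ 2 := by omega
  have hcop : Nat.Coprime 2 (5 * 10 ^ m - 3) :=
    (Nat.coprime_primes Nat.prime_two hp2).mpr hq_ne_two.symm
  rw [r_five_mul_ten_pow_sub_one]
  refine ⟨by omega, by omega, ?_⟩
  rw [v_mul_of_coprime hcop, v_prime hp, v_prime Nat.prime_two, v_prime hp2]
  omega
end

section
/- Let p be a prime with m+1 decimal digits (m ≥ 4) satisfying v(p) = v(r(p)) with r(p) composite, and write r(p) = f·q with q an odd prime and f ∈ {2,4} with v(f) = p - q. Then writing p = (a_m ⋯ a_0) in decimal, a_0 ∈ {1,3,7,9} and a_m ∈ {2,4,6,8}, and if f = 4 a contradiction results; hence f = 2. -/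
lemma v_four : v 4 = 4 := by
  have h1 : (4 : ℕ).primeFactors = {2} := by
    rw [show (4 : ℕ) = 2 ^ 2 by norm_num,
      Nat.primeFactors_prime_pow (by norm_num) Nat.prime_two]
  have h2 : (4 : ℕ).factorization 2 = 2 := by
    rw [show (4 : ℕ) = 2 ^ 2 by norm_num, Nat.Prime.factorization_pow Nat.prime_two]
    simp
  simp [v, h1, h2]

lemma mod9_r (n : ℕ) : n % 9 = r n % 9 := by
  conv_lhs => rw [← Nat.ofDigits_digits 10 n]
  unfold r
  rw [Nat.ofDigits_mod 10 9, Nat.ofDigits_mod 10 9 ((Nat.digits 10 n).reverse)]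
  norm_num [Nat.ofDigits_one, List.sum_reverse]

lemma getLast_digits : ∀ (k n : ℕ) (h : Nat.digits 10 n ≠ []),
    (Nat.digits 10 n).length = k + 1 → (Nat.digits 10 n).getLast h = n / 10 ^ k := by
  intro k
  induction k with
  | zero =>
    intro n h hn
    have hn0 : 0 < n := Nat.pos_of_ne_zero (Nat.digits_ne_nil_iff_ne_zero.mp h)
    have h10 : n < 10 := by
      have := Nat.lt_base_pow_length_digits (b := 10) (m := n) (by norm_num)
      rw [hn] at this; simpa using this
    have hd : Nat.digits 10 n = [n] := by
      rw [Nat.digits_def' (by norm_num : 1 < 10) hn0, Nat.mod_eq_of_lt h10,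
        Nat.div_eq_of_lt h10]
      simp
    simp [List.getLast_congr _ _ hd]
  | succ k ih =>
    intro n h hn
    have hn0 : 0 < n := Nat.pos_of_ne_zero (Nat.digits_ne_nil_iff_ne_zero.mp h)
    have hlen : (Nat.digits 10 (n / 10)).length = k + 1 := by
      rw [Nat.digits_def' (by norm_num : 1 < 10) hn0] at hn
      simpa using hn
    have hne : Nat.digits 10 (n / 10) ≠ [] := by
      intro hx; rw [hx] at hlen; simp at hlen
    rw [Nat.digits_getLast n (by norm_num) h hne, ih _ hne hlen,
      Nat.div_div_eq_div_mul, ← pow_succ']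

theorem stmt_16 (p m q f : ℕ) (hm : 4 ≤ m) (hp : p.Prime) (hL : L p = m + 1)
    (hv : v p = v (r p)) (hcomp : 1 < r p ∧ ¬ (r p).Prime)
    (hq : q.Prime) (hqodd : Odd q) (hf : f = 2 ∨ f = 4)
    (hrp : r p = f * q) (hvf : v f = (p : ℤ) - q) :
    p % 10 ∈ ({1, 3, 7, 9} : Set ℕ) ∧ p / 10 ^ m ∈ ({2, 4, 6, 8} : Set ℕ) ∧ f = 2 := by
  have hp0 : p ≠ 0 := hp.pos.ne'
  have hlen : (Nat.digits 10 p).length = m + 1 := hL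
  have hub : p < 10 ^ (m + 1) := by
    have := Nat.lt_base_pow_length_digits (b := 10) (m := p) (by norm_num)
    rwa [hlen] at this
  have hlb : 10 ^ m ≤ p := by
    have h := Nat.base_pow_length_digits_le 10 p (by norm_num) hp0
    rw [hlen] at h
    have h' : 10 * 10 ^ m ≤ 10 * p := by rw [← pow_succ']; exact h
    omega
  have hmle : 10000 ≤ p := by
    calc (10000 : ℕ) = 10 ^ 4 := by norm_num
    _ ≤ 10 ^ m := Nat.pow_le_pow_right (by norm_num) hm
    _ ≤ p := hlb
  have h2 : ¬ (2 ∣ p) := by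
    intro h
    rcases (Nat.Prime.eq_one_or_self_of_dvd hp 2 h) with h' | h' <;> omega
  have h5 : ¬ (5 ∣ p) := by
    intro h
    rcases (Nat.Prime.eq_one_or_self_of_dvd hp 5 h) with h' | h' <;> omega
  have hmod2 : p % 2 ≠ 0 := fun h => h2 (Nat.dvd_of_mod_eq_zero h)
  have hmod5 : p % 5 ≠ 0 := fun h => h5 (Nat.dvd_of_mod_eq_zero h)
  have hlast : p % 10 = 1 ∨ p % 10 = 3 ∨ p % 10 = 7 ∨ p % 10 = 9 := by omega
  have ha1 : 1 ≤ p / 10 ^ m := (Nat.one_le_div_iff (by positivity)).2 hlb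
  have ha9 : p / 10 ^ m < 10 := by
    rw [Nat.div_lt_iff_lt_mul (by positivity)]
    have : 10 ^ (m + 1) = 10 ^ m * 10 := pow_succ 10 m
    omega
  have hne : Nat.digits 10 p ≠ [] := by
    intro h; rw [h] at hlen; simp at hlen
  have hlead : r p % 10 = p / 10 ^ m := by
    have hgl : (Nat.digits 10 p).getLast hne = p / 10 ^ m :=
      getLast_digits m p hne hlen
    have hh : (Nat.digits 10 p).reverse.head! = p / 10 ^ m :=
      List.head!_of_head?
        (by rw [List.head?_reverse, List.getLast?_eq_getLast hne, hgl])
    unfold r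
    rw [Nat.ofDigits_mod_eq_head!, hh, Nat.mod_eq_of_lt ha9]
  have hrpeven : r p % 2 = 0 := by
    rcases hf with h | h <;> subst h <;> omega
  have haeven : (p / 10 ^ m) % 2 = 0 := by omega
  have hf2 : f = 2 := by
    rcases hf with h | h
    · exact h
    · exfalso
      subst h
      rw [v_four] at hvf
      have hpq : p = q + 4 := by
        have : (p : ℤ) = (q : ℤ) + 4 := by linarith
        exact_mod_cast this
      have h9 : p % 9 = (4 * q) % 9 := by rw [mod9_r, hrp]
      omega
  refine ⟨?_, ?_, hf2⟩
  · simp only [Set.mem_insert_iff, Set.mem_singleton_iff]; tauto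
  · simp only [Set.mem_insert_iff, Set.mem_singleton_iff]; omega
end

section
/- If p is a prime of m+1 decimal digits (m ≥ 4) whose leftmost digit is 4 and rightmost digit is 9, with p - 2 prime, and r(p) = 2(p-2), then all decimal digits of p other than the leading one are 9; that is, p = 5·10^m - 1. -/
/-!
Write the decimal digits of `p`, least significant first, as `9, t, 4`, and let `X` and `Y` be the
numbers with digit lists `t` and `t.reverse`. Then `p = 9 + 10 X + 4·10^m` and
`r p = 4 + 10 Y + 9·10^m`, so `r p = 2 (p - 2)` says `Y + 10^(m-1) = 2 X + 1`. Comparing the lowest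
and the highest digit on both sides of this relation forces both outer digits of `t` to be `9`, and
stripping them leaves the same relation for the inner block. Hence `t` consists of nines,
`X = 10^(m-1) - 1`, and `p = 5·10^m - 1`.
-/

open Nat

theorem ofDigits_cons_append_singleton (b a c : ℕ) (l : List ℕ) :
    ofDigits b (a :: (l ++ [c])) = a + b * (ofDigits b l + b ^ l.length * c) := by
  rw [ofDigits_cons, ofDigits_append, ofDigits_singleton]

theorem reverse_cons_append_singleton {α : Type*} (a c : α) (l : List α) :
    (a :: (l ++ [c])).reverse = c :: (l.reverse ++ [a]) := by
  simp

theorem digits_eq_cons_append_div_pow {b n m : ℕ} (hb : 1 < b)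
    (hlen : (digits b n).length = m + 2) :
    ∃ t : List ℕ, t.length = m ∧ digits b n = n % b :: (t ++ [n / b ^ (m + 1)]) := by
  have hn : n ≠ 0 := by rintro rfl; simp at hlen
  rw [digits_eq_cons_digits_div hb hn] at hlen ⊢
  obtain ⟨t, c, htc⟩ := (List.eq_nil_or_concat' (digits b (n / b))).resolve_left
    fun h => by simp [h] at hlen
  have ht : t.length = m := by simpa [htc] using hlen
  have hX : ofDigits b t < b ^ m :=
    ht ▸ ofDigits_lt_base_pow_length hb fun x hx =>
      digits_lt_base (m := n / b) hb (by simp [htc, hx])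
  have hc : n / b ^ (m + 1) = c := by
    have hdiv : n / b = ofDigits b t + b ^ m * c := by
      rw [← ofDigits_digits b (n / b), htc, ofDigits_append, ofDigits_singleton, ht]
    rw [pow_succ', ← Nat.div_div_eq_div_mul, hdiv, Nat.add_mul_div_left _ _ (by positivity),
      Nat.div_eq_of_lt hX, zero_add]
  exact ⟨t, ht, by rw [htc, hc]⟩

theorem outer_digits_eq_nine {a c X Y P : ℕ} (ha : a < 10) (hc : c < 10) (hX : X < P)
    (hY : Y < P) (h : c + 10 * (Y + P * a) + 100 * P = 2 * (a + 10 * (X + P * c)) + 1) :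
    a = 9 ∧ c = 9 := by
  -- the coefficients of `10 P` on the two sides differ by the carry out of the lower digits
  have hcarry : a + 10 = 2 * c ∨ a + 10 = 2 * c + 1 := by
    have h1 : P * (a + 10) < P * (2 * c + 2) := by nlinarith
    have h2 : P * (2 * c) < P * (a + 11) := by nlinarith
    have hlt := lt_of_mul_lt_mul_left h1
    have hgt := lt_of_mul_lt_mul_left h2
    omega
  -- together with `c ≡ 2 a + 1 [MOD 10]` from the units digits, only `a = c = 9` remains
  omega

theorem ofDigits_add_one_eq_pow_of_reverse {d : List ℕ} (hd : ∀ x ∈ d, x < 10)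
    (h : ofDigits 10 d.reverse + 10 ^ d.length = 2 * ofDigits 10 d + 1) :
    ofDigits 10 d + 1 = 10 ^ d.length := by
  induction d using List.bidirectionalRec with
  | nil => rfl
  | singleton a =>
    simp only [List.reverse_singleton, ofDigits_singleton, List.length_singleton] at h ⊢
    omega
  | cons_append a l c ih =>
    have hl : ∀ x ∈ l, x < 10 := fun x hx => hd x (by simp [hx])
    have hX := ofDigits_lt_base_pow_length (by norm_num) hl
    have hY : ofDigits 10 l.reverse < 10 ^ l.length := by
      simpa using
        ofDigits_lt_base_pow_length (by norm_num) fun x hx => hl x (List.mem_reverse.mp hx)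
    have hpow : 10 ^ (a :: (l ++ [c])).length = 100 * 10 ^ l.length := by
      simp only [List.length_cons, List.length_append, List.length_nil]; ring
    rw [reverse_cons_append_singleton, hpow, ofDigits_cons_append_singleton,
      ofDigits_cons_append_singleton, List.length_reverse] at h
    rw [hpow, ofDigits_cons_append_singleton]
    obtain ⟨rfl, rfl⟩ := outer_digits_eq_nine (hd a (by simp)) (hd c (by simp)) hX hY
      (by linarith)
    have hinner := ih hl (by linarith)
    linarith

theorem stmt_17_general (p m : ℕ) (hL : L p = m + 1)
    (hlead : p / 10 ^ m = 4) (hlast : p % 10 = 9)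
    (hrp : r p = 2 * (p - 2)) :
    p = 5 * 10 ^ m - 1 := by
  obtain ⟨k, rfl⟩ : ∃ k, m = k + 1 :=
    exists_eq_succ_of_ne_zero fun hm => by simp [hm] at hlead; omega
  obtain ⟨t, ht, hdigits⟩ := digits_eq_cons_append_div_pow (by norm_num) hL
  rw [hlead, hlast] at hdigits
  have hp : p = 9 + 10 * (ofDigits 10 t + 10 ^ k * 4) := by
    conv_lhs => rw [← ofDigits_digits 10 p]
    rw [hdigits, ofDigits_cons_append_singleton, ht]
  have hr : r p = 4 + 10 * (ofDigits 10 t.reverse + 10 ^ k * 9) := by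
    rw [r, hdigits, reverse_cons_append_singleton, ofDigits_cons_append_singleton,
      List.length_reverse, ht]
  have hmiddle : ofDigits 10 t + 1 = 10 ^ k := by
    have ht_lt : ∀ x ∈ t, x < 10 := fun x hx =>
      digits_lt_base (m := p) (by norm_num) (by simp [hdigits, hx])
    rw [← ht]
    exact ofDigits_add_one_eq_pow_of_reverse ht_lt (by rw [ht]; omega)
  rw [pow_succ]
  omega

theorem stmt_17 (p m : ℕ) (hm : 4 ≤ m) (hp : p.Prime) (hL : L p = m + 1)
    (hlead : p / 10 ^ m = 4) (hlast : p % 10 = 9)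
    (hp2 : (p - 2).Prime) (hrp : r p = 2 * (p - 2)) :
    p = 5 * 10 ^ m - 1 :=
  stmt_17_general p m hL hlead hlast hrp
end
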